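/- arXiv:1507.04109 — 4 statements merged into one kernel-verified Lean document; each statement's English description precedes it below -/
import Mathlib

section
/- Let a,b,c > 0 and let z,w ∈ ℂ with |z| = |w| = 1 and P(z,w) = 0. Then (z,w) = (1,1), and consequently a² + b² + c² = 2ab + 2bc + 2ac. That is, the intersection of the spectral curve {P = 0} with the unit torus 𝕋² = {(z,w) ∈ ℂ² : |z| = |w| = 1} is either empty or equal to the single real point (1,1). -/
/-!
Writing `z = x + i s` and `w = y + i u` on the unit torus, `P(z,w)` is the real polynomial
`torusPoly a b c x s y u`. Modulo `x² + s² = 1` and `y² + u² = 1` it has two sum-of-squares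
representations, one with the extra term `16 a²bc · su` and one with `-8(a²+b²+c²)bc · su`;
a zero of `P` therefore forces `su = 0`, and then both squares vanish. Vanishing of the
squares leaves only `s = u = 0`, and among the four real points `(±1, ±1)` only `(1,1)` is
compatible with `a, b, c > 0`.
-/

/-- The characteristic polynomial `P(z,w)` of the 1-2 model with parameters
`a`, `b`, `c`. -/
noncomputable def charPoly (a b c : ℝ) (z w : ℂ) : ℂ :=
  ((a ^ 4 + b ^ 4 + c ^ 4 + 6 * a ^ 2 * b ^ 2 + 6 * a ^ 2 * c ^ 2
      + 6 * b ^ 2 * c ^ 2 : ℝ) : ℂ)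
    - 2 * (a : ℂ) * (b : ℂ) * (z + 1 / z) * ((a ^ 2 + b ^ 2 - c ^ 2 : ℝ) : ℂ)
    - 2 * (a : ℂ) * (c : ℂ) * (w + 1 / w) * ((a ^ 2 + c ^ 2 - b ^ 2 : ℝ) : ℂ)
    - 2 * (b : ℂ) * (c : ℂ) * (z / w + w / z) * ((b ^ 2 + c ^ 2 - a ^ 2 : ℝ) : ℂ)

open ComplexConjugate

noncomputable def torusPoly (a b c x s y u : ℝ) : ℝ :=
  a ^ 4 + b ^ 4 + c ^ 4 + 6 * a ^ 2 * b ^ 2 + 6 * a ^ 2 * c ^ 2 + 6 * b ^ 2 * c ^ 2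
    - 4 * a * b * (a ^ 2 + b ^ 2 - c ^ 2) * x
    - 4 * a * c * (a ^ 2 + c ^ 2 - b ^ 2) * y
    - 4 * b * c * (b ^ 2 + c ^ 2 - a ^ 2) * (x * y + s * u)

lemma Complex.add_one_div_of_norm_eq_one {z : ℂ} (hz : ‖z‖ = 1) :
    z + 1 / z = ((2 * z.re : ℝ) : ℂ) := by
  rw [one_div, Complex.inv_eq_conj hz, Complex.add_conj]

lemma Complex.div_add_div_of_norm_eq_one {z w : ℂ} (hz : ‖z‖ = 1) (hw : ‖w‖ = 1) :
    z / w + w / z = ((2 * (z.re * w.re + z.im * w.im) : ℝ) : ℂ) := by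
  have hconj : w / z = conj (z / w) := by
    rw [div_eq_mul_inv, div_eq_mul_inv, Complex.inv_eq_conj hz, Complex.inv_eq_conj hw,
      map_mul, Complex.conj_conj, mul_comm]
  rw [hconj, Complex.add_conj, div_eq_mul_inv, Complex.inv_eq_conj hw]
  simp [Complex.mul_re]

lemma Complex.re_sq_add_im_sq_of_norm_eq_one {z : ℂ} (hz : ‖z‖ = 1) :
    z.re ^ 2 + z.im ^ 2 = 1 := by
  have h := Complex.sq_norm z
  rw [hz, Complex.normSq_apply] at h
  linear_combination -h

lemma charPoly_eq_torusPoly (a b c : ℝ) {z w : ℂ} (hz : ‖z‖ = 1) (hw : ‖w‖ = 1) :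
    charPoly a b c z w = torusPoly a b c z.re z.im w.re w.im := by
  rw [charPoly, Complex.add_one_div_of_norm_eq_one hz, Complex.add_one_div_of_norm_eq_one hw,
    Complex.div_add_div_of_norm_eq_one hz hw, torusPoly]
  push_cast
  ring

section TorusPoly

variable {a b c x s y u : ℝ}

lemma torusPoly_eq_sq_add_sq_add (hx : x ^ 2 + s ^ 2 = 1) (hy : y ^ 2 + u ^ 2 = 1) :
    torusPoly a b c x s y u =
      (3 * a ^ 2 + b ^ 2 + c ^ 2 - 2 * (a + b * x) * (a + c * y) - 2 * b * c * (s * u)) ^ 2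
        + 4 * (b * (a + c * y) * s - c * (a + b * x) * u) ^ 2
        + 16 * a ^ 2 * b * c * (s * u) := by
  rw [torusPoly]
  linear_combination
    (-4*b^2*c^2*u^2 - 4*b^2*c^2*y^2 - 8*a*b^2*c*y - 4*a^2*b^2) * hx
      + (-4*b^2*c^2 - 8*a*b*c^2*x - 4*a^2*c^2) * hy

lemma torusPoly_eq_sq_add_sq_sub (hx : x ^ 2 + s ^ 2 = 1) (hy : y ^ 2 + u ^ 2 = 1) :
    torusPoly a b c x s y u =
      (3 * a ^ 2 + b ^ 2 + c ^ 2 - 2 * (a + b * x) * (a + c * y) + 2 * b * c * (s * u)) ^ 2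
        + 4 * (b * (a + c * y) * s + c * (a + b * x) * u) ^ 2
        - 8 * (a ^ 2 + b ^ 2 + c ^ 2) * (b * c * (s * u)) := by
  rw [torusPoly]
  linear_combination
    (-4*b^2*c^2*u^2 - 4*b^2*c^2*y^2 - 8*a*b^2*c*y - 4*a^2*b^2) * hx
      + (-4*b^2*c^2 - 8*a*b*c^2*x - 4*a^2*c^2) * hy

lemma mul_eq_zero_of_torusPoly_eq_zero (ha : 0 < a) (hb : 0 < b) (hc : 0 < c)
    (hx : x ^ 2 + s ^ 2 = 1) (hy : y ^ 2 + u ^ 2 = 1) (hP : torusPoly a b c x s y u = 0) :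
    s * u = 0 := by
  have hbc : 0 < b * c := mul_pos hb hc
  rcases lt_trichotomy (s * u) 0 with hneg | hzero | hpos
  · rw [torusPoly_eq_sq_add_sq_sub hx hy] at hP
    have : (a ^ 2 + b ^ 2 + c ^ 2) * (b * c * (s * u)) < 0 :=
      mul_neg_of_pos_of_neg (by positivity) (mul_neg_of_pos_of_neg hbc hneg)
    nlinarith
  · exact hzero
  · rw [torusPoly_eq_sq_add_sq_add hx hy] at hP
    nlinarith [mul_pos (mul_pos (pow_pos ha 2) hbc) hpos]

lemma eq_one_and_eq_one_of_sign (ha : 0 < a) (hb : 0 < b) (hc : 0 < c)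
    (hx : x = 1 ∨ x = -1) (hy : y = 1 ∨ y = -1)
    (h : 3 * a ^ 2 + b ^ 2 + c ^ 2 = 2 * (a + b * x) * (a + c * y)) : x = 1 ∧ y = 1 := by
  rcases hx with rfl | rfl <;> rcases hy with rfl | rfl
  · exact ⟨rfl, rfl⟩
  · nlinarith [sq_nonneg (a - b), mul_pos hc (add_pos ha hb)]
  · nlinarith [sq_nonneg (a - c), mul_pos hb (add_pos ha hc)]
  · nlinarith [sq_nonneg (b - c), mul_pos ha (add_pos hb hc)]

theorem eq_one_of_torusPoly_eq_zero (ha : 0 < a) (hb : 0 < b) (hc : 0 < c)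
    (hx : x ^ 2 + s ^ 2 = 1) (hy : y ^ 2 + u ^ 2 = 1) (hP : torusPoly a b c x s y u = 0) :
    x = 1 ∧ s = 0 ∧ y = 1 ∧ u = 0 ∧
      a ^ 2 + b ^ 2 + c ^ 2 = 2 * a * b + 2 * b * c + 2 * a * c := by
  have hsu := mul_eq_zero_of_torusPoly_eq_zero ha hb hc hx hy hP
  rw [torusPoly_eq_sq_add_sq_add hx hy, hsu] at hP
  have hQ : 3 * a ^ 2 + b ^ 2 + c ^ 2 = 2 * (a + b * x) * (a + c * y) := by
    nlinarith [sq_nonneg (3 * a ^ 2 + b ^ 2 + c ^ 2 - 2 * (a + b * x) * (a + c * y)),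
      sq_nonneg (b * (a + c * y) * s - c * (a + b * x) * u)]
  have hL : b * (a + c * y) * s = c * (a + b * x) * u := by
    nlinarith [sq_nonneg (3 * a ^ 2 + b ^ 2 + c ^ 2 - 2 * (a + b * x) * (a + c * y)),
      sq_nonneg (b * (a + c * y) * s - c * (a + b * x) * u)]
  have hfactors : (a + b * x) * (a + c * y) ≠ 0 := by
    intro h0
    nlinarith
  obtain ⟨hs, hu⟩ : s = 0 ∧ u = 0 := by
    rcases mul_eq_zero.mp hsu with hs | hu
    · have hu : c * (a + b * x) * u = 0 := by rw [← hL, hs, mul_zero]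
      exact ⟨hs, (mul_eq_zero.mp hu).resolve_left
        (mul_ne_zero hc.ne' (left_ne_zero_of_mul hfactors))⟩
    · have hs : b * (a + c * y) * s = 0 := by rw [hL, hu, mul_zero]
      exact ⟨(mul_eq_zero.mp hs).resolve_left
        (mul_ne_zero hb.ne' (right_ne_zero_of_mul hfactors)), hu⟩
  obtain ⟨rfl, rfl⟩ := eq_one_and_eq_one_of_sign ha hb hc
    (sq_eq_one_iff.mp (by simpa [hs] using hx)) (sq_eq_one_iff.mp (by simpa [hu] using hy)) hQ
  exact ⟨rfl, hs, rfl, hu, by linarith⟩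

end TorusPoly

/-- For `a,b,c > 0`, the spectral curve `{P = 0}` meets the
unit torus only possibly at the real point `(1,1)`, and in that case
`a² + b² + c² = 2ab + 2bc + 2ac`. -/
theorem spectral_curve_unit_torus
    (a b c : ℝ) (ha : 0 < a) (hb : 0 < b) (hc : 0 < c)
    (z w : ℂ) (hz : ‖z‖ = 1) (hw : ‖w‖ = 1)
    (hP : charPoly a b c z w = 0) :
    z = 1 ∧ w = 1 ∧
      a ^ 2 + b ^ 2 + c ^ 2 = 2 * a * b + 2 * b * c + 2 * a * c := by
  rw [charPoly_eq_torusPoly a b c hz hw, Complex.ofReal_eq_zero] at hP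
  obtain ⟨hzre, hzim, hwre, hwim, hcrit⟩ := eq_one_of_torusPoly_eq_zero ha hb hc
    (Complex.re_sq_add_im_sq_of_norm_eq_one hz) (Complex.re_sq_add_im_sq_of_norm_eq_one hw) hP
  exact ⟨Complex.ext hzre hzim, Complex.ext hwre hwim, hcrit⟩
end

section
/- Let a,b,c > 0. There exist z,w ∈ ℂ with |z| = |w| = 1 and P(z,w) = 0 if and only if √a = √b + √c, or √b = √a + √c, or √c = √a + √b. -/
/-! On the unit torus `2 - (z + 1/z) = ‖z - 1‖²` and `2 - (z/w + w/z) = ‖z - w‖²`, so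
`P(z,w) = Q² + 2(α‖z - 1‖² + β‖w - 1‖² + γ‖z - w‖²)` with `Q = a² + b² + c² - 2ab - 2bc - 2ca`,
`α = ab(a² + b² - c²)`, `β = ac(a² + c² - b²)`, `γ = bc(b² + c² - a²)`. The form
`α|s|² + β|t|² + γ|s - t|²` is positive semidefinite, since `α + γ = b(a + c)((a - c)² + b²) > 0`
and its determinant `αβ + βγ + γα` is `abc` times a quintic that is nonnegative on the positive
octant. Hence `P` vanishes somewhere on the torus iff `Q = 0` (then at `z = w = 1`), and
`-Q = (√a + √b + √c)(√b + √c - √a)(√a + √c - √b)(√a + √b - √c)` is Heron's factorisation. -/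

theorem quadForm_nonneg {α β γ : ℝ} (h₁ : 0 < α + γ) (h₂ : 0 ≤ α * β + β * γ + γ * α)
    (s t : ℝ) : 0 ≤ α * s ^ 2 + β * t ^ 2 + γ * (s - t) ^ 2 := by
  have key : (α + γ) * (α * s ^ 2 + β * t ^ 2 + γ * (s - t) ^ 2)
      = ((α + γ) * s - γ * t) ^ 2 + (α * β + β * γ + γ * α) * t ^ 2 := by ring
  refine (mul_nonneg_iff_of_pos_left h₁).mp ?_
  rw [key]
  positivity

theorem quadForm_nonneg_complex {α β γ : ℝ} (h₁ : 0 < α + γ)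
    (h₂ : 0 ≤ α * β + β * γ + γ * α) (s t : ℂ) :
    0 ≤ α * ‖s‖ ^ 2 + β * ‖t‖ ^ 2 + γ * ‖s - t‖ ^ 2 := by
  have hre := quadForm_nonneg h₁ h₂ s.re t.re
  have him := quadForm_nonneg h₁ h₂ s.im t.im
  simp only [Complex.sq_norm, Complex.normSq_apply, Complex.sub_re, Complex.sub_im]
  linear_combination hre + him

-- In the gaps `p = b - c`, `q = a - b` the quintic has only nonnegative coefficients.
theorem quintic_nonneg_of_le {a b c : ℝ} (hc : 0 ≤ c) (hcb : c ≤ b) (hba : b ≤ a) :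
    0 ≤ a ^ 5 + b ^ 5 + c ^ 5 - a * (b ^ 2 - c ^ 2) ^ 2 - b * (a ^ 2 - c ^ 2) ^ 2
      - c * (a ^ 2 - b ^ 2) ^ 2 := by
  obtain ⟨p, hp, rfl⟩ : ∃ p ≥ 0, b = c + p := ⟨b - c, by linarith, by ring⟩
  obtain ⟨q, hq, rfl⟩ : ∃ q ≥ 0, a = c + p + q := ⟨a - (c + p), by linarith, by ring⟩
  ring_nf
  positivity

theorem quintic_nonneg {a b c : ℝ} (ha : 0 ≤ a) (hb : 0 ≤ b) (hc : 0 ≤ c) :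
    0 ≤ a ^ 5 + b ^ 5 + c ^ 5 - a * (b ^ 2 - c ^ 2) ^ 2 - b * (a ^ 2 - c ^ 2) ^ 2
      - c * (a ^ 2 - b ^ 2) ^ 2 := by
  rcases le_total a b with h₁ | h₁ <;> rcases le_total b c with h₂ | h₂ <;>
    rcases le_total a c with h₃ | h₃ <;>
    first
    | linarith [quintic_nonneg_of_le ha h₁ h₂]
    | linarith [quintic_nonneg_of_le ha h₃ h₂]
    | linarith [quintic_nonneg_of_le hb h₁ h₃]
    | linarith [quintic_nonneg_of_le hb h₂ h₃]
    | linarith [quintic_nonneg_of_le hc h₃ h₁]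
    | linarith [quintic_nonneg_of_le hc h₂ h₁]

theorem couplingForm_nonneg {a b c : ℝ} (ha : 0 < a) (hb : 0 < b) (hc : 0 < c) (s t : ℂ) :
    0 ≤ a * b * (a ^ 2 + b ^ 2 - c ^ 2) * ‖s‖ ^ 2 + a * c * (a ^ 2 + c ^ 2 - b ^ 2) * ‖t‖ ^ 2
      + b * c * (b ^ 2 + c ^ 2 - a ^ 2) * ‖s - t‖ ^ 2 := by
  refine quadForm_nonneg_complex ?_ ?_ s t
  · have h : a * b * (a ^ 2 + b ^ 2 - c ^ 2) + b * c * (b ^ 2 + c ^ 2 - a ^ 2)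
        = b * (a + c) * ((a - c) ^ 2 + b ^ 2) := by ring
    rw [h]
    positivity
  · have h := mul_nonneg (mul_nonneg (mul_nonneg ha.le hb.le) hc.le)
      (quintic_nonneg ha.le hb.le hc.le)
    linear_combination h

theorem heron_poly_eq_zero_iff {x y z : ℝ} (hx : 0 ≤ x) (hy : 0 ≤ y) (hz : 0 ≤ z) :
    (x ^ 2) ^ 2 + (y ^ 2) ^ 2 + (z ^ 2) ^ 2 - 2 * x ^ 2 * y ^ 2 - 2 * y ^ 2 * z ^ 2
      - 2 * z ^ 2 * x ^ 2 = 0 ↔ x = y + z ∨ y = x + z ∨ z = x + y := by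
  constructor
  · intro h
    have factor : (x + y + z) * (y + z - x) * (x + z - y) * (x + y - z) = 0 := by
      linear_combination -h
    simp only [mul_eq_zero] at factor
    rcases factor with ((h | h) | h) | h
    · left; linarith
    · left; linarith
    · right; left; linarith
    · right; right; linarith
  · rintro (rfl | rfl | rfl) <;> ring

theorem heron_poly_sqrt_eq_zero_iff {a b c : ℝ} (ha : 0 ≤ a) (hb : 0 ≤ b) (hc : 0 ≤ c) :
    a ^ 2 + b ^ 2 + c ^ 2 - 2 * a * b - 2 * b * c - 2 * c * a = 0 ↔
      √a = √b + √c ∨ √b = √a + √c ∨ √c = √a + √b := by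
  have h := heron_poly_eq_zero_iff (Real.sqrt_nonneg a) (Real.sqrt_nonneg b)
    (Real.sqrt_nonneg c)
  rwa [Real.sq_sqrt ha, Real.sq_sqrt hb, Real.sq_sqrt hc] at h

theorem two_sub_add_one_div_of_norm_eq_one {z : ℂ} (hz : ‖z‖ = 1) :
    2 - (z + 1 / z) = ((‖z - 1‖ ^ 2 : ℝ) : ℂ) := by
  rw [Complex.ofReal_pow, ← Complex.mul_conj', map_sub, map_one, one_div,
    Complex.inv_eq_conj hz]
  have h := Complex.mul_conj' z
  rw [hz, Complex.ofReal_one, one_pow] at h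
  linear_combination -h

theorem charPoly_eq (a b c : ℝ) (z w : ℂ) :
    charPoly a b c z w = (((a ^ 2 + b ^ 2 + c ^ 2 - 2 * a * b - 2 * b * c - 2 * c * a) ^ 2 : ℝ) : ℂ)
      + 2 * (((a * b * (a ^ 2 + b ^ 2 - c ^ 2) : ℝ) : ℂ) * (2 - (z + 1 / z))
        + ((a * c * (a ^ 2 + c ^ 2 - b ^ 2) : ℝ) : ℂ) * (2 - (w + 1 / w))
        + ((b * c * (b ^ 2 + c ^ 2 - a ^ 2) : ℝ) : ℂ) * (2 - (z / w + w / z))) := by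
  unfold charPoly
  push_cast
  ring

theorem charPoly_of_norm_eq_one (a b c : ℝ) {z w : ℂ} (hz : ‖z‖ = 1) (hw : ‖w‖ = 1) :
    charPoly a b c z w = (((a ^ 2 + b ^ 2 + c ^ 2 - 2 * a * b - 2 * b * c - 2 * c * a) ^ 2
      + 2 * (a * b * (a ^ 2 + b ^ 2 - c ^ 2) * ‖z - 1‖ ^ 2
        + a * c * (a ^ 2 + c ^ 2 - b ^ 2) * ‖w - 1‖ ^ 2
        + b * c * (b ^ 2 + c ^ 2 - a ^ 2) * ‖z - w‖ ^ 2) : ℝ) : ℂ) := by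
  have hw0 : w ≠ 0 := norm_ne_zero_iff.mp (by rw [hw]; exact one_ne_zero)
  have hzw : ‖z / w‖ = 1 := by rw [norm_div, hz, hw, div_one]
  have hzw' : ‖z / w - 1‖ = ‖z - w‖ := by
    rw [div_sub_one hw0, norm_div, hw, div_one]
  rw [charPoly_eq, two_sub_add_one_div_of_norm_eq_one hz, two_sub_add_one_div_of_norm_eq_one hw,
    ← one_div_div z w, two_sub_add_one_div_of_norm_eq_one hzw, hzw']
  push_cast
  ring

/-- For `a,b,c > 0`, the spectral curve meets the unit torus
if and only if `√a = √b + √c`, `√b = √a + √c`, or `√c = √a + √b`. -/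
theorem spectral_curve_intersects_iff
    (a b c : ℝ) (ha : 0 < a) (hb : 0 < b) (hc : 0 < c) :
    (∃ z w : ℂ, ‖z‖ = 1 ∧ ‖w‖ = 1 ∧ charPoly a b c z w = 0) ↔
      (Real.sqrt a = Real.sqrt b + Real.sqrt c ∨
        Real.sqrt b = Real.sqrt a + Real.sqrt c ∨
        Real.sqrt c = Real.sqrt a + Real.sqrt b) := by
  rw [← heron_poly_sqrt_eq_zero_iff ha.le hb.le hc.le]
  constructor
  · rintro ⟨z, w, hz, hw, hP⟩
    rw [charPoly_of_norm_eq_one a b c hz hw, Complex.ofReal_eq_zero] at hP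
    have hform := couplingForm_nonneg ha hb hc (z - 1) (w - 1)
    rw [sub_sub_sub_cancel_right] at hform
    exact pow_eq_zero_iff two_ne_zero |>.mp (by nlinarith)
  · intro hQ
    refine ⟨1, 1, norm_one, norm_one, ?_⟩
    simp [charPoly_of_norm_eq_one a b c norm_one norm_one, hQ]
end

section
/- Let a,b,c > 0 satisfy the acute angle condition a² < b² + c², b² < a² + c², c² < a² + b², and set A = (a−b−c)/(a+b+c), B = (b−a−c)/(a+b+c), C = (c−a−b)/(a+b+c). Then A, B, C are all nonzero and each of the three quantities BC/A, AC/B, AB/C lies in the open interval (−1, 0). (These quantities are the squared edge-interactions ε_a², ε_b², ε_c² of the Ising model associated with the 1-2 model, so under the acute angle condition that Ising model is antiferromagnetic.) -/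
/-- Under the acute angle condition, the squared Ising
edge-interactions `BC/A`, `AC/B`, `AB/C` of the Ising model associated with the
1-2 model all lie in `(−1, 0)`: the model is antiferromagnetic. -/
theorem antiferromagnetic_under_acute_angle_condition
    (a b c : ℝ) (ha : 0 < a) (hb : 0 < b) (hc : 0 < c)
    (h1 : a ^ 2 < b ^ 2 + c ^ 2) (h2 : b ^ 2 < a ^ 2 + c ^ 2)
    (h3 : c ^ 2 < a ^ 2 + b ^ 2)
    (A B C : ℝ)
    (hA : A = (a - b - c) / (a + b + c))
    (hB : B = (b - a - c) / (a + b + c))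
    (hC : C = (c - a - b) / (a + b + c)) :
    A ≠ 0 ∧ B ≠ 0 ∧ C ≠ 0 ∧
      B * C / A ∈ Set.Ioo (-1 : ℝ) 0 ∧
      A * C / B ∈ Set.Ioo (-1 : ℝ) 0 ∧
      A * B / C ∈ Set.Ioo (-1 : ℝ) 0 := by
  have hs : 0 < a + b + c := by linarith
  have hAneg : A < 0 := by
    rw [hA]; apply div_neg_of_neg_of_pos _ hs; nlinarith [mul_pos hb hc]
  have hBneg : B < 0 := by
    rw [hB]; apply div_neg_of_neg_of_pos _ hs; nlinarith [mul_pos ha hc]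
  have hCneg : C < 0 := by
    rw [hC]; apply div_neg_of_neg_of_pos _ hs; nlinarith [mul_pos ha hb]
  have key1 : B * C < -A := by
    rw [hA, hB, hC, div_mul_div_comm, ← neg_div,
      div_lt_div_iff₀ (mul_pos hs hs) hs]
    nlinarith [mul_pos hs hs, mul_pos hs (sub_pos.mpr h1)]
  have key2 : A * C < -B := by
    rw [hA, hB, hC, div_mul_div_comm, ← neg_div,
      div_lt_div_iff₀ (mul_pos hs hs) hs]
    nlinarith [mul_pos hs hs, mul_pos hs (sub_pos.mpr h2)]
  have key3 : A * B < -C := by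
    rw [hA, hB, hC, div_mul_div_comm, ← neg_div,
      div_lt_div_iff₀ (mul_pos hs hs) hs]
    nlinarith [mul_pos hs hs, mul_pos hs (sub_pos.mpr h3)]
  refine ⟨ne_of_lt hAneg, ne_of_lt hBneg, ne_of_lt hCneg, ?_, ?_, ?_⟩
  · exact ⟨(lt_div_iff_of_neg hAneg).mpr (by linarith),
      div_neg_of_pos_of_neg (mul_pos_of_neg_of_neg hBneg hCneg) hAneg⟩
  · exact ⟨(lt_div_iff_of_neg hBneg).mpr (by linarith),
      div_neg_of_pos_of_neg (mul_pos_of_neg_of_neg hAneg hCneg) hBneg⟩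
  · exact ⟨(lt_div_iff_of_neg hCneg).mpr (by linarith),
      div_neg_of_pos_of_neg (mul_pos_of_neg_of_neg hAneg hBneg) hCneg⟩
end

section
/- Let a,b,c > 0 and set A = (a−b−c)/(a+b+c), B = (b−a−c)/(a+b+c), C = (c−a−b)/(a+b+c), assuming ABC ≠ 0. Then it is not the case that all three of BC/A, AC/B, AB/C lie in the open interval (0,1). (That is, the Ising model associated with the 1-2 model, whose squared edge-interactions are these three quantities, is never ferromagnetic.) -/
/-- The Ising model associated with the 1-2 model is never
ferromagnetic: the squared edge-interactions `BC/A`, `AC/B`, `AB/C` cannot all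
lie in `(0, 1)`. -/
theorem never_ferromagnetic
    (a b c : ℝ) (ha : 0 < a) (hb : 0 < b) (hc : 0 < c)
    (A B C : ℝ)
    (hA : A = (a - b - c) / (a + b + c))
    (hB : B = (b - a - c) / (a + b + c))
    (hC : C = (c - a - b) / (a + b + c))
    (hABC : A * B * C ≠ 0) :
    ¬ (B * C / A ∈ Set.Ioo (0 : ℝ) 1 ∧
        A * C / B ∈ Set.Ioo (0 : ℝ) 1 ∧
        A * B / C ∈ Set.Ioo (0 : ℝ) 1) := by
  have hs : (0:ℝ) < a + b + c := by linarith
  have hs' : a + b + c ≠ 0 := ne_of_gt hs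
  have hsum : A + B + C = -1 := by
    rw [hA, hB, hC]; field_simp; ring
  have hA1 : 0 < 1 + A := by
    rw [hA]
    have : 1 + (a - b - c) / (a + b + c) = 2 * a / (a + b + c) := by
      field_simp; ring
    rw [this]; positivity
  have hB1 : 0 < 1 + B := by
    rw [hB]
    have : 1 + (b - a - c) / (a + b + c) = 2 * b / (a + b + c) := by
      field_simp; ring
    rw [this]; positivity
  have hC1 : 0 < 1 + C := by
    rw [hC]
    have : 1 + (c - a - b) / (a + b + c) = 2 * c / (a + b + c) := by
      field_simp; ring
    rw [this]; positivity
  rintro ⟨⟨h1, h2⟩, ⟨h3, h4⟩, ⟨h5, h6⟩⟩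
  rcases lt_trichotomy A 0 with hAneg | hA0 | hApos
  · -- A < 0, so B*C < 0, so one of B, C positive
    have hBC : B * C < 0 := by
      rcases div_pos_iff.mp h1 with ⟨_, h⟩ | ⟨h, _⟩
      · linarith
      · exact h
    rcases lt_trichotomy B 0 with hBneg | hB0 | hBpos
    · have hCpos : 0 < C := by nlinarith
      have : A * B < C := (div_lt_one hCpos).mp h6
      nlinarith [mul_pos hA1 hB1]
    · exact hABC (by rw [hB0]; ring)
    · have : A * C < B := (div_lt_one hBpos).mp h4
      nlinarith [mul_pos hA1 hC1]
  · exact hABC (by rw [hA0]; ring)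
  · have : B * C < A := (div_lt_one hApos).mp h2
    nlinarith [mul_pos hB1 hC1]
end
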